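/- There exists N ∈ ℕ such that for all n ≥ N, all m with 2 ≤ m ≤ n−1, and every real ℓ with 100·√n < ℓ < ℓ_max, there exist positions f_i, f_j, f_k ∈ {1,…,n} such that ‖p(f_i)‖ < ℓ, ‖p(f_j)‖ < ℓ, ‖p(f_k)‖ < ℓ, and ‖p(f_i)−p(f_j)‖ > ℓ/5, ‖p(f_i)−p(f_k)‖ > ℓ/5, ‖p(f_j)−p(f_k)‖ > ℓ/5. -/
import Mathlib


open scoped Classical

/-- `p(x) = x` for `x ≤ m` and `p(x) = 2x − m` for `x > m`. -/
def pval (m x : ℕ) : ℤ := if x ≤ m then (x : ℤ) else 2 * x - m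
/-- `‖z‖ = min { |a| + |b|·√n : a, b ∈ ℤ, z ≡ a + b·m (mod 2n−m+1) }`. -/
noncomputable def knorm (n m : ℕ) (z : ℤ) : ℝ :=
  sInf {r : ℝ | ∃ a b : ℤ,
    z ≡ a + b * m [ZMOD ((2 * n - m + 1 : ℕ) : ℤ)] ∧ r = |a| + |b| * Real.sqrt n}
def kset (n m : ℕ) (z : ℤ) : Set ℝ :=
  {r : ℝ | ∃ a b : ℤ,
    z ≡ a + b * m [ZMOD ((2 * n - m + 1 : ℕ) : ℤ)] ∧ r = |a| + |b| * Real.sqrt n}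

lemma knorm_def (n m : ℕ) (z : ℤ) : knorm n m z = sInf (kset n m z) := rfl

lemma kset_nonempty (n m : ℕ) (z : ℤ) : (kset n m z).Nonempty :=
  ⟨(|z| : ℤ), z, 0, by simp, by push_cast; simp⟩

lemma kset_bdd (n m : ℕ) (z : ℤ) : BddBelow (kset n m z) := by
  refine ⟨0, ?_⟩
  rintro r ⟨a, b, -, rfl⟩
  positivity

lemma knorm_le (n m : ℕ) (z a b : ℤ)
    (h : z ≡ a + b * m [ZMOD ((2 * n - m + 1 : ℕ) : ℤ)]) :
    knorm n m z ≤ |a| + |b| * Real.sqrt n :=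
  csInf_le (kset_bdd n m z) ⟨a, b, h, rfl⟩

lemma knorm_le_abs (n m : ℕ) (z : ℤ) : knorm n m z ≤ |z| := by
  have := knorm_le n m z z 0 (by simp)
  simpa using this

lemma knorm_triangle (n m : ℕ) (x y : ℤ) :
    knorm n m (x + y) ≤ knorm n m x + knorm n m y := by
  have key : ∀ r1 ∈ kset n m x, ∀ r2 ∈ kset n m y, knorm n m (x + y) ≤ r1 + r2 := by
    rintro r1 ⟨a1, b1, h1, rfl⟩ r2 ⟨a2, b2, h2, rfl⟩
    have hc : x + y ≡ (a1 + a2) + (b1 + b2) * m [ZMOD ((2 * n - m + 1 : ℕ) : ℤ)] := by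
      have := h1.add h2
      have e : a1 + b1 * m + (a2 + b2 * m) = (a1 + a2) + (b1 + b2) * m := by ring
      rwa [e] at this
    have h3 := knorm_le n m (x + y) _ _ hc
    have ha : (|a1 + a2| : ℝ) ≤ (|a1| : ℝ) + (|a2| : ℝ) := by
      exact_mod_cast abs_add_le a1 a2
    have hb : (|b1 + b2| : ℝ) ≤ (|b1| : ℝ) + (|b2| : ℝ) := by
      exact_mod_cast abs_add_le b1 b2
    have hs : (0:ℝ) ≤ Real.sqrt n := Real.sqrt_nonneg _
    push_cast at h3 ⊢
    nlinarith [h3, mul_le_mul_of_nonneg_right hb hs]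
  have h2 : ∀ r2 ∈ kset n m y, knorm n m (x + y) - r2 ≤ knorm n m x := by
    intro r2 h2
    exact le_csInf (kset_nonempty n m x) fun r1 h1 => by
      have := key r1 h1 r2 h2; linarith
  have h3 : knorm n m (x + y) - knorm n m x ≤ knorm n m y := by
    refine le_csInf (kset_nonempty n m y) fun r2 hr2 => ?_
    have := h2 r2 hr2; linarith
  linarith

lemma knorm_sub_lower (n m : ℕ) (x y : ℤ) :
    knorm n m x - knorm n m y ≤ knorm n m (x - y) := by
  have := knorm_triangle n m (x - y) y
  simp only [sub_add_cancel] at this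
  linarith

lemma ivt_aux (g : ℕ → ℝ) (hstep : ∀ f : ℕ, g (f + 1) ≤ g f + 2) (c : ℝ) (f0 : ℕ)
    (hf0 : 1 ≤ f0) (hgc : c ≤ g f0) (hg1 : g 1 < c) :
    ∃ f : ℕ, 1 ≤ f ∧ f ≤ f0 ∧ c ≤ g f ∧ g f < c + 2 := by
  have hP : ∃ k, c ≤ g (k + 1) := ⟨f0 - 1, by rwa [Nat.sub_add_cancel hf0]⟩
  let k0 := Nat.find hP
  have hk0 : c ≤ g (k0 + 1) := Nat.find_spec hP
  have hk0le : k0 ≤ f0 - 1 := Nat.find_le (by rwa [Nat.sub_add_cancel hf0])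
  have hk0pos : 1 ≤ k0 := by
    rcases Nat.eq_zero_or_pos k0 with h | h
    · exfalso; rw [h] at hk0; simp at hk0; linarith
    · exact h
  have hprev : ¬ c ≤ g (k0 - 1 + 1) := Nat.find_min hP (by omega)
  rw [show k0 - 1 + 1 = k0 by omega] at hprev
  push_neg at hprev
  exact ⟨k0 + 1, by omega, by omega, hk0, by have := hstep k0; linarith⟩

/-- `ℓ_max = max over ω ∈ {1,…,2n−m} of ‖ω‖`. -/
noncomputable def lmax (n m : ℕ) : ℝ :=
  sSup {r : ℝ | ∃ ω : ℕ, 1 ≤ ω ∧ ω ≤ 2 * n - m ∧ r = knorm n m (ω : ℤ)}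

/-- For large `n`, any `m` with `2 ≤ m ≤ n−1` and any real `ℓ` with
`100√n < ℓ < ℓ_max`, there are positions `f_i, f_j, f_k` with
`‖p(f_i)‖, ‖p(f_j)‖, ‖p(f_k)‖ < ℓ` and pairwise `‖·‖`-distances `> ℓ/5`. -/
theorem position_spread :
    ∃ N : ℕ, ∀ n : ℕ, N ≤ n → ∀ m : ℕ, 2 ≤ m → m ≤ n - 1 →
      ∀ ℓ : ℝ, 100 * Real.sqrt n < ℓ → ℓ < lmax n m →
        ∃ fi fj fk : ℕ,
          1 ≤ fi ∧ fi ≤ n ∧ 1 ≤ fj ∧ fj ≤ n ∧ 1 ≤ fk ∧ fk ≤ n ∧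
          knorm n m (pval m fi) < ℓ ∧
          knorm n m (pval m fj) < ℓ ∧
          knorm n m (pval m fk) < ℓ ∧
          ℓ / 5 < knorm n m (pval m fi - pval m fj) ∧
          ℓ / 5 < knorm n m (pval m fi - pval m fk) ∧
          ℓ / 5 < knorm n m (pval m fj - pval m fk) := by
  refine ⟨1, fun n hn m hm2 hm1 ℓ hℓ1 hℓ2 => ?_⟩
  have hn3 : 3 ≤ n := by omega
  have hs1 : (1 : ℝ) ≤ Real.sqrt n := by
    rw [show (1 : ℝ) = Real.sqrt 1 by simp]
    exact Real.sqrt_le_sqrt (by exact_mod_cast (by omega : 1 ≤ n))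
  have hℓ100 : 100 < ℓ := by nlinarith
  -- big element from lmax
  have hne : {r : ℝ | ∃ ω : ℕ, 1 ≤ ω ∧ ω ≤ 2 * n - m ∧ r = knorm n m (ω : ℤ)}.Nonempty :=
    ⟨knorm n m 1, 1, le_refl 1, by omega, by norm_num⟩
  obtain ⟨r, ⟨ω, hω1, hω2, rfl⟩, hrℓ⟩ := exists_lt_of_lt_csSup hne hℓ2
  set g : ℕ → ℝ := fun f => knorm n m (pval m f) with hg
  -- step bound
  have hstep : ∀ f : ℕ, g (f + 1) ≤ g f + 2 := by
    intro f
    have hd : pval m (f + 1) - pval m f = 1 ∨ pval m (f + 1) - pval m f = 2 := by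
      unfold pval; split_ifs <;> push_cast <;> omega
    have h1 := knorm_triangle n m (pval m f) (pval m (f + 1) - pval m f)
    rw [add_sub_cancel] at h1
    have h2 : knorm n m (pval m (f + 1) - pval m f) ≤ 2 := by
      rcases hd with h | h <;> rw [h]
      · have := knorm_le_abs n m 1; norm_num at this; linarith
      · have := knorm_le_abs n m 2; norm_num at this; linarith
    simp only [hg]
    linarith
  -- position fstar with large norm
  set fstar : ℕ := if ω ≤ m then ω else (ω + m + 1) / 2 with hfstar
  have hf1 : 1 ≤ fstar := by
    rw [hfstar]; split_ifs <;> omega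
  have hfn : fstar ≤ n := by
    rw [hfstar]; split_ifs <;> omega
  have hpf : pval m fstar = (ω : ℤ) ∨ pval m fstar = (ω : ℤ) + 1 := by
    rcases le_or_gt ω m with h | h
    · left
      rw [hfstar, if_pos h]
      simp [pval, h]
    · have hmf : m < fstar := by rw [hfstar, if_neg (by omega)]; omega
      rw [hfstar, if_neg (by omega)] at hmf ⊢
      rw [pval, if_neg (by omega)]
      have h2 : 2 * ((ω + m + 1) / 2) = ω + m ∨ 2 * ((ω + m + 1) / 2) = ω + m + 1 := by omega
      rcases h2 with h2 | h2
      · left; omega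
      · right; omega
  have hgf : ℓ - 1 < g fstar := by
    have h1 := knorm_triangle n m (pval m fstar) ((ω : ℤ) - pval m fstar)
    rw [add_sub_cancel] at h1
    have h2 : knorm n m ((ω : ℤ) - pval m fstar) ≤ 1 := by
      rcases hpf with h | h <;> rw [h]
      · rw [sub_self]
        have := knorm_le_abs n m 0; simp at this; linarith
      · have : (ω : ℤ) - ((ω : ℤ) + 1) = -1 := by ring
        rw [this]
        simpa using knorm_le_abs n m (-1)
    simp only [hg]
    linarith
  have hg1 : g 1 ≤ 1 := by
    have hp1 : pval m 1 = 1 := by simp [pval, show 1 ≤ m by omega]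
    simp only [hg, hp1]
    simpa using knorm_le_abs n m 1
  -- pick the three positions
  obtain ⟨fi, hfi1, hfi2, hfi3, hfi4⟩ :=
    ivt_aux g hstep (ℓ - 2) fstar hf1 (by linarith) (by linarith)
  obtain ⟨fj, hfj1, hfj2, hfj3, hfj4⟩ :=
    ivt_aux g hstep (ℓ / 2) fstar hf1 (by linarith) (by linarith)
  refine ⟨fi, fj, 1, hfi1, le_trans hfi2 hfn, hfj1, le_trans hfj2 hfn, le_refl 1, by omega,
    ?_, ?_, ?_, ?_, ?_, ?_⟩
  · have : g fi < ℓ := by linarith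
    simpa [hg] using this
  · have : g fj < ℓ := by linarith
    simpa [hg] using this
  · have : g 1 < ℓ := by linarith
    simpa [hg] using this
  · have := knorm_sub_lower n m (pval m fi) (pval m fj)
    simp only [hg] at hfi3 hfj4
    linarith
  · have := knorm_sub_lower n m (pval m fi) (pval m 1)
    simp only [hg] at hfi3 hg1
    linarith
  · have := knorm_sub_lower n m (pval m fj) (pval m 1)
    simp only [hg] at hfj3 hg1
    linarith
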